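/- arXiv:2406.08327 — 6 statements merged into one kernel-verified Lean document; each statement's English description precedes it below -/
import Mathlib

section
/- Let d ≥ 1, m > 0 real, and μ ∈ ℂ with Re μ > d. Then the function p ↦ (‖p‖² + m²)^{-μ/2} is integrable on ℝ^d and ∫_{ℝ^d} (‖p‖² + m²)^{-μ/2} dp = π^{d/2} m^{d-μ} Γ((μ-d)/2) / Γ(μ/2). -/
open MeasureTheory Complex
open scoped Real
open Set Module

/-!
In polar coordinates the integral equals `n · vol(B) · ∫₀^∞ r^(n-1) (r² + m²)^(-μ/2) dr`.
The substitution `r² = m² x` turns the radial integral into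
`m^(n-μ) / 2 · ∫₀^∞ x^(n/2-1) (1 + x)^(-μ/2) dx`, and `x = t / (1 - t)` identifies the latter with
the Beta integral `B(n/2, (μ-n)/2) = Γ(n/2) Γ((μ-n)/2) / Γ(μ/2)`. The factor `Γ(n/2)` cancels
against the area of the unit sphere, `n · vol(B) = 2 π^(n/2) / Γ(n/2)`.
Integrability follows by comparison with `(1 + ‖p‖²)^(-Re μ / 2)`.
-/

namespace Complex

lemma cpow_add_one {x : ℂ} (hx : x ≠ 0) (z : ℂ) : x ^ (z + 1) = x ^ z * x := by
  rw [cpow_add _ _ hx, cpow_one]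

lemma ofReal_sq_cpow {m : ℝ} (hm : 0 ≤ m) (z : ℂ) :
    ((m ^ 2 : ℝ) : ℂ) ^ z = (m : ℂ) ^ (2 * z) := by
  rw [← Real.rpow_two, ← cpow_mul_ofReal_nonneg hm, ofReal_ofNat]

/-- No convergence hypotheses are needed: the two integrals correspond under a change of variables,
so they diverge (and take the junk value `0`) together. -/
theorem betaIntegral_eq_integral_Ioi (a b : ℂ) :
    betaIntegral a b = ∫ v in Ioi (0 : ℝ), (v : ℂ) ^ (a - 1) * (1 + v) ^ (-(a + b)) := by
  have himage : (fun x : ℝ => x / (1 - x)) '' Ioo 0 1 = Ioi 0 := by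
    ext v
    refine ⟨?_, fun hv => ⟨v / (1 + v), ?_, ?_⟩⟩
    · rintro ⟨x, ⟨hx0, hx1⟩, rfl⟩
      exact div_pos hx0 (sub_pos.2 hx1)
    · have : 0 < 1 + v := by linarith [hv.out]
      exact ⟨div_pos hv this, (div_lt_one this).2 (by linarith)⟩
    · have : 1 + v ≠ 0 := by linarith [hv.out]
      field_simp
      ring
  have hderiv : ∀ x ∈ Ioo (0 : ℝ) 1,
      HasDerivWithinAt (fun x : ℝ => x / (1 - x)) ((1 - x)⁻¹ ^ 2) (Ioo 0 1) x := by
    intro x hx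
    have : 1 - x ≠ 0 := (sub_pos.2 hx.2).ne'
    refine (((hasDerivAt_id' x).div ((hasDerivAt_id' x).const_sub 1) this).congr_deriv
      ?_).hasDerivWithinAt
    field_simp
    ring
  have hinj : InjOn (fun x : ℝ => x / (1 - x)) (Ioo 0 1) := by
    intro x hx y hy h
    have : 1 - x ≠ 0 := (sub_pos.2 hx.2).ne'
    have : 1 - y ≠ 0 := (sub_pos.2 hy.2).ne'
    field_simp at h
    linarith
  rw [← himage, integral_image_eq_integral_abs_deriv_smul measurableSet_Ioo hderiv hinj,
    betaIntegral, intervalIntegral.integral_of_le zero_le_one, integral_Ioc_eq_integral_Ioo]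
  refine setIntegral_congr_fun measurableSet_Ioo fun x hx => ?_
  obtain ⟨hx0, hx1⟩ : 0 < x ∧ 0 < 1 - x := ⟨hx.1, sub_pos.2 hx.2⟩
  have h1x : (1 - x : ℂ) ≠ 0 := mod_cast hx1.ne'
  have hv : x / (1 - x) = x * (1 - x)⁻¹ := div_eq_mul_inv _ _
  have hw : 1 + x / (1 - x) = (1 - x)⁻¹ := by field_simp; ring
  have hinv (c : ℂ) : ((1 - x : ℝ) : ℂ)⁻¹ ^ c = ((1 - x : ℝ) : ℂ) ^ (-c) := by
    rw [inv_cpow_ofReal_nonneg hx1.le, cpow_neg]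
  have hjac : (((1 - x)⁻¹ ^ 2 : ℝ) : ℂ) = ((1 - x : ℝ) : ℂ) ^ (-2 : ℂ) := by
    rw [cpow_neg, cpow_ofNat, ofReal_pow, ofReal_inv, inv_pow]
  rw [abs_of_nonneg (by positivity), real_smul, hjac,
    show (1 : ℂ) + ((x / (1 - x) : ℝ) : ℂ) = ((1 + x / (1 - x) : ℝ) : ℂ) by push_cast; rfl,
    hw, hv, ofReal_mul, mul_cpow_ofReal_nonneg hx0.le (inv_nonneg.2 hx1.le), ofReal_inv,
    hinv, hinv, ofReal_sub, ofReal_one, mul_left_comm, mul_assoc, ← cpow_add _ _ h1x,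
    ← cpow_add _ _ h1x]
  ring_nf

theorem integral_Ioi_cpow_mul_sq_add_sq_cpow_neg (s μ : ℂ) {m : ℝ} (hm : 0 < m) :
    ∫ r in Ioi (0 : ℝ), (r : ℂ) ^ (s - 1) * ((r : ℂ) ^ 2 + (m : ℂ) ^ 2) ^ (-(μ / 2)) =
      (m : ℂ) ^ (s - μ) / 2 * betaIntegral (s / 2) ((μ - s) / 2) := by
  set g : ℝ → ℂ := fun y => (y : ℂ) ^ (s / 2 - 1) * (y + (m : ℂ) ^ 2) ^ (-(μ / 2))
  have hM : 0 < m ^ 2 := by positivity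
  have hsq : ∫ y in Ioi (0 : ℝ), g y =
      2 * ∫ r in Ioi (0 : ℝ), (r : ℂ) ^ (s - 1) * ((r : ℂ) ^ 2 + (m : ℂ) ^ 2) ^ (-(μ / 2)) := by
    rw [← integral_comp_rpow_Ioi g two_ne_zero, ← integral_const_mul]
    refine setIntegral_congr_fun measurableSet_Ioi fun r (hr : 0 < r) => ?_
    have hpow : (r : ℂ) ^ (s - 1) = (r : ℂ) ^ (((2 : ℝ) : ℂ) * (s / 2 - 1)) * r := by
      rw [← cpow_add_one (ofReal_ne_zero.2 hr.ne')]
      push_cast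
      ring_nf
    simp only [g]
    rw [← cpow_mul_ofReal_nonneg hr.le, real_smul, Real.rpow_two, abs_two, hpow,
      show (2 : ℝ) - 1 = 1 by norm_num, Real.rpow_one]
    push_cast
    ring
  have hscale : ∫ y in Ioi (0 : ℝ), g y = (m : ℂ) ^ (s - μ) *
      ∫ x in Ioi (0 : ℝ), (x : ℂ) ^ (s / 2 - 1) * (1 + x) ^ (-(s / 2 + (μ - s) / 2)) := by
    have hcomp := integral_comp_mul_left_Ioi' g 0 hM
    rw [mul_zero] at hcomp
    rw [← hcomp, ← integral_const_mul, ← integral_smul]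
    refine setIntegral_congr_fun measurableSet_Ioi fun x (hx : 0 < x) => ?_
    have hMpow : ((m ^ 2 : ℝ) : ℂ) ^ (s / 2 - 1) * ((m ^ 2 : ℝ) : ℂ) ^ (-(μ / 2)) * (m ^ 2 : ℝ)
        = (m : ℂ) ^ (s - μ) := by
      rw [← cpow_add _ _ (ofReal_ne_zero.2 hM.ne'), ← cpow_add_one (ofReal_ne_zero.2 hM.ne'),
        ofReal_sq_cpow hm.le]
      ring_nf
    simp only [g]
    rw [show ((m ^ 2 * x : ℝ) : ℂ) + (m : ℂ) ^ 2 = ((m ^ 2 : ℝ) : ℂ) * ((1 + x : ℝ) : ℂ) by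
        push_cast; ring,
      ofReal_mul, mul_cpow_ofReal_nonneg hM.le hx.le, mul_cpow_ofReal_nonneg hM.le (by positivity),
      real_smul, show -(s / 2 + (μ - s) / 2) = -(μ / 2) by ring, ← hMpow, ofReal_add, ofReal_one]
    ring
  rw [betaIntegral_eq_integral_Ioi]
  linear_combination (hsq.symm.trans hscale) / 2

end Complex

section NormSqAddSq

variable {E : Type*} [NormedAddCommGroup E] [MeasurableSpace E] [BorelSpace E]

theorem integrable_norm_sq_add_sq_cpow_neg [NormedSpace ℝ E] [FiniteDimensional ℝ E]
    (ν : Measure E) [ν.IsAddHaarMeasure] {m : ℝ} (hm : m ≠ 0) {μ : ℂ}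
    (hμ : (finrank ℝ E : ℝ) < μ.re) :
    Integrable (fun p : E => ((‖p‖ : ℂ) ^ 2 + (m : ℂ) ^ 2) ^ (-(μ / 2))) ν := by
  set c := min 1 (m ^ 2)
  have hc : 0 < c := lt_min one_pos (by positivity)
  have hμ0 : 0 < μ.re := (finrank ℝ E).cast_nonneg.trans_lt hμ
  refine ((integrable_rpow_neg_one_add_norm_sq hμ).const_mul (c ^ (-μ.re / 2))).mono'
    (Measurable.aestronglyMeasurable (by fun_prop)) (.of_forall fun p => ?_)
  have hlow : c * (1 + ‖p‖ ^ 2) ≤ ‖p‖ ^ 2 + m ^ 2 := by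
    nlinarith [sq_nonneg ‖p‖, min_le_left 1 (m ^ 2), min_le_right 1 (m ^ 2)]
  calc ‖((‖p‖ : ℂ) ^ 2 + (m : ℂ) ^ 2) ^ (-(μ / 2))‖
      = (‖p‖ ^ 2 + m ^ 2) ^ (-μ.re / 2) := by
        rw [← ofReal_pow, ← ofReal_pow, ← ofReal_add,
          norm_cpow_eq_rpow_re_of_pos (by positivity)]
        simp [neg_div]
    _ ≤ (c * (1 + ‖p‖ ^ 2)) ^ (-μ.re / 2) :=
        Real.rpow_le_rpow_of_nonpos (by positivity) hlow (by linarith)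
    _ = c ^ (-μ.re / 2) * (1 + ‖p‖ ^ 2) ^ (-μ.re / 2) := Real.mul_rpow hc.le (by positivity)

variable [InnerProductSpace ℝ E] [FiniteDimensional ℝ E] [Nontrivial E]

theorem finrank_mul_volume_real_ball_one :
    (finrank ℝ E : ℝ) * volume.real (Metric.ball (0 : E) 1) =
      2 * π ^ ((finrank ℝ E : ℝ) / 2) / Real.Gamma ((finrank ℝ E : ℝ) / 2) := by
  have hn : 0 < (finrank ℝ E : ℝ) := mod_cast finrank_pos
  have hn2 : 0 < (finrank ℝ E : ℝ) / 2 := by positivity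
  rw [measureReal_def, InnerProductSpace.volume_ball, ENNReal.ofReal_one, one_pow, one_mul,
    ENNReal.toReal_ofReal (by positivity), Real.Gamma_add_one hn2.ne', Real.sqrt_eq_rpow,
    ← Real.rpow_natCast, ← Real.rpow_mul Real.pi_pos.le]
  field_simp

theorem integral_norm_sq_add_sq_cpow_neg {m : ℝ} (hm : 0 < m) {μ : ℂ}
    (hμ : (finrank ℝ E : ℝ) < μ.re) :
    ∫ p : E, ((‖p‖ : ℂ) ^ 2 + (m : ℂ) ^ 2) ^ (-(μ / 2)) =
      (π : ℂ) ^ ((finrank ℝ E : ℂ) / 2) * (m : ℂ) ^ ((finrank ℝ E : ℂ) - μ) *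
        Gamma ((μ - finrank ℝ E) / 2) / Gamma (μ / 2) := by
  set n := finrank ℝ E
  have hn : 0 < n := finrank_pos
  have hradial : ∫ r in Ioi (0 : ℝ), r ^ (n - 1) • ((r : ℂ) ^ 2 + (m : ℂ) ^ 2) ^ (-(μ / 2)) =
      ∫ r in Ioi (0 : ℝ), (r : ℂ) ^ ((n : ℂ) - 1) * ((r : ℂ) ^ 2 + (m : ℂ) ^ 2) ^ (-(μ / 2)) := by
    refine setIntegral_congr_fun measurableSet_Ioi fun r (hr : 0 < r) => ?_
    rw [real_smul, ← Real.rpow_natCast, Nat.cast_sub hn, ofReal_cpow hr.le]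
    push_cast
    rfl
  have hsphere : (n : ℂ) * volume.real (Metric.ball (0 : E) 1) =
      2 * (π : ℂ) ^ ((n : ℂ) / 2) / Gamma ((n : ℂ) / 2) := by
    have := congrArg ((↑) : ℝ → ℂ) (finrank_mul_volume_real_ball_one (E := E))
    push_cast [ofReal_cpow Real.pi_pos.le, ← Gamma_ofReal] at this
    exact this
  have hGamma : Gamma ((n : ℂ) / 2) ≠ 0 := Gamma_ne_zero_of_re_pos (by simp [hn])
  rw [integral_fun_norm_addHaar volume (fun r => ((r : ℂ) ^ 2 + (m : ℂ) ^ 2) ^ (-(μ / 2))),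
    hradial, integral_Ioi_cpow_mul_sq_add_sq_cpow_neg _ _ hm, nsmul_eq_mul, real_smul,
    betaIntegral_eq_Gamma_mul_div _ _ (by simp [hn]) (by simp; linarith),
    show (n : ℂ) / 2 + (μ - n) / 2 = μ / 2 by ring, ← mul_assoc, hsphere]
  field_simp

end NormSqAddSq

/-- For `d ≥ 1`, `m > 0` real, `Re μ > d`, the function
`p ↦ (‖p‖² + m²)^{-μ/2}` is integrable on `ℝ^d` and
`∫ (‖p‖²+m²)^{-μ/2} dp = π^{d/2} m^{d-μ} Γ((μ-d)/2)/Γ(μ/2)`. -/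
theorem stmt_2 (d : ℕ) (hd : 1 ≤ d) (m : ℝ) (hm : 0 < m) (μ : ℂ) (hμ : (d : ℝ) < μ.re) :
    Integrable (fun p : EuclideanSpace ℝ (Fin d) =>
        ((‖p‖ : ℂ) ^ 2 + (m : ℂ) ^ 2) ^ (-(μ / 2))) ∧
    (∫ p : EuclideanSpace ℝ (Fin d), ((‖p‖ : ℂ) ^ 2 + (m : ℂ) ^ 2) ^ (-(μ / 2)))
      = ((Real.pi : ℝ) : ℂ) ^ ((d : ℂ) / 2) * (m : ℂ) ^ ((d : ℂ) - μ) *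
        Complex.Gamma ((μ - (d : ℂ)) / 2) / Complex.Gamma (μ / 2) := by
  have : Nonempty (Fin d) := Fin.pos_iff_nonempty.mp hd
  have hμ' : (finrank ℝ (EuclideanSpace ℝ (Fin d)) : ℝ) < μ.re := by
    rwa [finrank_euclideanSpace_fin]
  refine ⟨integrable_norm_sq_add_sq_cpow_neg volume hm.ne' hμ', ?_⟩
  simpa only [finrank_euclideanSpace_fin] using integral_norm_sq_add_sq_cpow_neg hm hμ'
end

section
/- Let α ∈ ℂ and z ∈ ℂ with Re z > 0. Then U_α(z) = z^{-α} U_{-α}(z); equivalently, ∫_0^∞ e^{-t - z/t} t^{-α-1} dt = z^{-α} ∫_0^∞ e^{-t - z/t} t^{α-1} dt. -/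
/-!
For real `x > 0` the integrand `e^{-t - x/t}` is invariant under `t ↦ x/t`, so its Mellin
transform `M_x(s) = ∫₀^∞ e^{-t - x/t} t^{s-1} dt` satisfies `M_x(s) = x^s M_x(-s)`.
Both sides of the identity are holomorphic in `z` on the right half-plane (differentiation
under the integral sign, dominated by the same integrand at `Re z / 2`), so the identity
theorem extends it from the positive reals.
-/

open MeasureTheory Complex Set Filter Asymptotics Topology

/-- `U_α(z) = π^{-1/2} mellin (besselIntegrand z) (-α)`. -/
noncomputable def besselIntegrand (z : ℂ) (t : ℝ) : ℂ := cexp (-t - z / t)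

lemma norm_besselIntegrand (z : ℂ) (t : ℝ) :
    ‖besselIntegrand z t‖ = Real.exp (-t - z.re / t) := by
  simp [besselIntegrand, Complex.norm_exp, Complex.div_ofReal_re]

lemma continuousOn_besselIntegrand (z : ℂ) : ContinuousOn (besselIntegrand z) (Ioi 0) := by
  unfold besselIntegrand
  refine Continuous.comp_continuousOn (g := cexp) (by fun_prop) ?_
  exact (continuous_ofReal.continuousOn.neg).sub (continuousOn_const.div
    continuous_ofReal.continuousOn fun t ht => ofReal_ne_zero.mpr (ne_of_gt ht))

lemma besselIntegrand_isBigO_atTop (z : ℂ) :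
    besselIntegrand z =O[atTop] fun t => Real.exp (-1 * t) := by
  refine IsBigO.of_bound (Real.exp |z.re|) ?_
  filter_upwards [eventually_ge_atTop 1] with t ht
  rw [norm_besselIntegrand, Real.norm_of_nonneg (Real.exp_pos _).le, ← Real.exp_add]
  gcongr
  have : -(z.re / t) ≤ |z.re| := calc
    -(z.re / t) ≤ |z.re / t| := neg_le_abs _
    _ = |z.re| / t := by rw [abs_div, abs_of_pos (zero_lt_one.trans_le ht)]
    _ ≤ |z.re| := div_le_self (abs_nonneg _) ht
  linarith

lemma besselIntegrand_isBigO_nhdsGT_zero {z : ℂ} (hz : 0 < z.re) (b : ℝ) :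
    besselIntegrand z =O[𝓝[>] 0] (· ^ b) := by
  have hexp : (fun t : ℝ => Real.exp (-z.re * t⁻¹)) =o[𝓝[>] 0] fun t => t⁻¹ ^ (-b) :=
    (isLittleO_exp_neg_mul_rpow_atTop hz (-b)).comp_tendsto tendsto_inv_nhdsGT_zero
  refine IsBigO.trans ?_ (hexp.isBigO.congr' EventuallyEq.rfl ?_)
  · refine IsBigO.of_bound 1 ?_
    filter_upwards [self_mem_nhdsWithin] with t (ht : 0 < t)
    rw [norm_besselIntegrand, one_mul, Real.norm_of_nonneg (Real.exp_pos _).le]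
    gcongr
    rw [neg_mul, ← div_eq_mul_inv]
    linarith
  · filter_upwards [self_mem_nhdsWithin] with t (ht : 0 < t)
    rw [Real.inv_rpow ht.le, Real.rpow_neg ht.le, inv_inv]

lemma mellinConvergent_besselIntegrand {z : ℂ} (hz : 0 < z.re) (s : ℂ) :
    MellinConvergent (besselIntegrand z) s :=
  mellinConvergent_of_isBigO_rpow_exp one_pos
    ((continuousOn_besselIntegrand z).locallyIntegrableOn measurableSet_Ioi)
    (besselIntegrand_isBigO_atTop z) (besselIntegrand_isBigO_nhdsGT_zero hz _)
    (show s.re - 1 < s.re by linarith)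

lemma besselIntegrand_ofReal_mul_inv {x : ℝ} (hx : x ≠ 0) (t : ℝ) :
    besselIntegrand x (x * t⁻¹) = besselIntegrand x t := by
  rcases eq_or_ne t 0 with rfl | ht
  · simp
  have hx' : (x : ℂ) ≠ 0 := ofReal_ne_zero.mpr hx
  simp only [besselIntegrand]
  push_cast
  congr 1
  field_simp
  ring

lemma mellin_besselIntegrand_ofReal {x : ℝ} (hx : 0 < x) (s : ℂ) :
    mellin (besselIntegrand x) s = (x : ℂ) ^ s * mellin (besselIntegrand x) (-s) := by
  calc mellin (besselIntegrand x) s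
      = mellin (fun t => (fun u => besselIntegrand x (x * u)) t⁻¹) s := by
        simp only [besselIntegrand_ofReal_mul_inv hx.ne']
    _ = (x : ℂ) ^ s * mellin (besselIntegrand x) (-s) := by
        rw [mellin_comp_inv (fun u => besselIntegrand x (x * u)), mellin_comp_mul_left _ _ hx,
          neg_neg, smul_eq_mul]

lemma norm_besselIntegrand_le_of_re_le {z w : ℂ} (h : z.re ≤ w.re) {t : ℝ} (ht : 0 < t) :
    ‖besselIntegrand w t‖ ≤ ‖besselIntegrand z t‖ := by
  rw [norm_besselIntegrand, norm_besselIntegrand]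
  gcongr

lemma hasDerivAt_besselIntegrand (t : ℝ) (w : ℂ) :
    HasDerivAt (besselIntegrand · t) (-(t : ℂ)⁻¹ * besselIntegrand w t) w := by
  have h : HasDerivAt (fun w : ℂ => -(t : ℂ) - w / t) (-(t : ℂ)⁻¹) w := by
    simpa [div_eq_mul_inv] using ((hasDerivAt_id w).div_const (t : ℂ)).const_sub (-(t : ℂ))
  rw [mul_comm]
  exact h.cexp

lemma hasDerivAt_mellin_besselIntegrand (s : ℂ) {z : ℂ} (hz : 0 < z.re) :
    HasDerivAt (fun w => mellin (besselIntegrand w) s)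
      (-mellin (besselIntegrand z) (s - 1)) z := by
  have hz2 : 0 < (z.re / 2 : ℂ).re := by simpa using hz
  have hre : ∀ w ∈ Metric.ball z (z.re / 2), z.re / 2 ≤ w.re := fun w hw => by
    have := (abs_le.mp ((abs_re_le_norm (w - z)).trans (mem_ball_iff_norm.mp hw).le)).1
    rw [sub_re] at this
    linarith
  have hderiv : ∀ t ∈ Ioi (0 : ℝ), ∀ w : ℂ,
      HasDerivAt (fun w => (t : ℂ) ^ (s - 1) • besselIntegrand w t)
        (-((t : ℂ) ^ (s - 1 - 1) • besselIntegrand w t)) w := fun t (ht : 0 < t) w => by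
    refine ((hasDerivAt_besselIntegrand t w).const_smul ((t : ℂ) ^ (s - 1))).congr_deriv ?_
    rw [cpow_sub (s - 1) 1 (ofReal_ne_zero.mpr ht.ne'), cpow_one, smul_eq_mul, smul_eq_mul]
    ring
  have hbound : ∀ t ∈ Ioi (0 : ℝ), ∀ w ∈ Metric.ball z (z.re / 2),
      ‖-((t : ℂ) ^ (s - 1 - 1) • besselIntegrand w t)‖
        ≤ ‖(t : ℂ) ^ (s - 1 - 1) • besselIntegrand (z.re / 2 : ℂ) t‖ :=
      fun t ht w hw => by
    rw [norm_neg, norm_smul, norm_smul]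
    gcongr
    exact norm_besselIntegrand_le_of_re_le (by simpa using hre w hw) ht
  have h := hasDerivAt_integral_of_dominated_loc_of_deriv_le (μ := volume.restrict (Ioi 0))
    (Metric.ball_mem_nhds z (half_pos hz))
    (((continuous_re.tendsto z).eventually (lt_mem_nhds hz)).mono fun w hw =>
      (mellinConvergent_besselIntegrand hw s).aestronglyMeasurable)
    (mellinConvergent_besselIntegrand hz s)
    (mellinConvergent_besselIntegrand hz (s - 1)).aestronglyMeasurable.neg
    ((ae_restrict_iff' measurableSet_Ioi).mpr (ae_of_all _ hbound))
    (mellinConvergent_besselIntegrand hz2 (s - 1)).norm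
    ((ae_restrict_iff' measurableSet_Ioi).mpr (ae_of_all _ fun t ht w _ => hderiv t ht w))
  simpa only [mellin, integral_neg] using h.2

lemma differentiableOn_mellin_besselIntegrand (s : ℂ) :
    DifferentiableOn ℂ (fun w => mellin (besselIntegrand w) s) {w | 0 < w.re} :=
  fun _ hz => (hasDerivAt_mellin_besselIntegrand s hz).differentiableAt.differentiableWithinAt

lemma frequently_ofReal_pos_nhdsNE_one :
    ∃ᶠ w in 𝓝[≠] (1 : ℂ), ∃ x : ℝ, 0 < x ∧ w = (x : ℂ) := by
  have hmap : Tendsto ofReal (𝓝[≠] (1 : ℝ)) (𝓝[≠] (1 : ℂ)) :=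
    continuous_ofReal.continuousWithinAt.tendsto_nhdsWithin fun x hx => by simpa using hx
  refine hmap.frequently (Eventually.frequently ?_)
  filter_upwards [nhdsWithin_le_nhds (eventually_gt_nhds one_pos)] with x hx using ⟨x, hx, rfl⟩

theorem mellin_besselIntegrand {z : ℂ} (hz : 0 < z.re) (s : ℂ) :
    mellin (besselIntegrand z) s = z ^ s * mellin (besselIntegrand z) (-s) := by
  have hU : IsOpen {w : ℂ | 0 < w.re} := isOpen_lt continuous_const continuous_re
  have hpow : DifferentiableOn ℂ (fun w : ℂ => w ^ s) {w | 0 < w.re} := fun w hw =>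
    (differentiableAt_id.cpow_const (Or.inl hw)).differentiableWithinAt
  have hlhs := (differentiableOn_mellin_besselIntegrand s).analyticOnNhd hU
  have hrhs := (hpow.mul (differentiableOn_mellin_besselIntegrand (-s))).analyticOnNhd hU
  refine hlhs.eqOn_of_preconnected_of_frequently_eq hrhs (convex_halfSpace_re_gt 0).isPreconnected
    (by simp : (1 : ℂ) ∈ {w : ℂ | 0 < w.re}) ?_ hz
  exact frequently_ofReal_pos_nhdsNE_one.mono fun _ ⟨x, hx, hw⟩ =>
    hw ▸ mellin_besselIntegrand_ofReal hx s

/-- For `Re z > 0`, `U_α(z) = z^{-α} U_{-α}(z)`, i.e.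
`∫₀^∞ e^{-t-z/t} t^{-α-1} dt = z^{-α} ∫₀^∞ e^{-t-z/t} t^{α-1} dt`. -/
theorem stmt_6 (α z : ℂ) (hz : 0 < z.re) :
    (∫ t in Set.Ioi (0 : ℝ),
        Complex.exp (-(t : ℂ) - z / (t : ℂ)) * (t : ℂ) ^ (-α - 1))
      = z ^ (-α) *
        ∫ t in Set.Ioi (0 : ℝ),
          Complex.exp (-(t : ℂ) - z / (t : ℂ)) * (t : ℂ) ^ (α - 1) := by
  simpa only [mellin, besselIntegrand, smul_eq_mul, mul_comm, neg_neg] using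
    mellin_besselIntegrand hz (-α)
end

section
/- For every z ∈ ℂ with Re z > 0, ∫_0^∞ e^{-t - z/t} t^{-1/2} dt = √π e^{-2√z}, where √z is the principal square root; equivalently U_{-1/2}(z) = e^{-2√z}. Consequently ∫_0^∞ e^{-t - z/t} t^{-3/2} dt = √π e^{-2√z}/√z, i.e. U_{1/2}(z) = e^{-2√z}/√z. -/
/-!
For real `x = b² > 0` the substitution `t = u²` turns the integral into
`2 e^{-2b} ∫₀^∞ e^{-(u - b/u)²} du`, and the Cauchy–Schlömilch substitution `v = u - b/u`
(whose Jacobian `1 + b/u²` is balanced against the symmetry `u ↦ b/u`) reduces this to the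
Gaussian integral. Both sides are holomorphic on the right half-plane (the left one by
differentiation under the integral sign), so they agree there by the identity theorem.
Differentiating in `z` then gives the `t^{-3/2}` integral, since the derivative of the
integrand brings down a factor `-1/t`.
-/

open MeasureTheory Complex Set Filter
open scoped Real Topology

section CauchySchlomilch

variable {b : ℝ}

lemma image_Ioi_sub_div (hb : 0 < b) : (fun u : ℝ => u - b / u) '' Ioi 0 = univ := by
  refine eq_univ_of_forall fun v => ?_
  -- the positive root of `u² - v u - b`
  set s := √(v ^ 2 + 4 * b)
  have hs : s ^ 2 = v ^ 2 + 4 * b := Real.sq_sqrt (by positivity)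
  have hvs : |v| < s := by
    rw [← Real.sqrt_sq_eq_abs]
    exact Real.sqrt_lt_sqrt (sq_nonneg v) (by linarith)
  have hpos : 0 < v + s := by linarith [neg_abs_le v]
  refine ⟨(v + s) / 2, half_pos hpos, ?_⟩
  field_simp
  nlinarith

lemma image_Ioi_div (hb : 0 < b) : (fun u : ℝ => b / u) '' Ioi 0 = Ioi 0 := by
  refine Subset.antisymm (image_subset_iff.mpr fun u hu => div_pos hb hu) fun v hv => ?_
  exact ⟨b / v, div_pos hb hv, div_div_cancel₀ hb.ne'⟩

lemma strictMonoOn_sub_div (hb : 0 ≤ b) : StrictMonoOn (fun u : ℝ => u - b / u) (Ioi 0) := by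
  intro x hx y _ hxy
  have : b / y ≤ b / x := div_le_div_of_nonneg_left hb hx hxy.le
  dsimp only
  linarith

lemma hasDerivAt_sub_div {x : ℝ} (hx : x ≠ 0) :
    HasDerivAt (fun u : ℝ => u - b / u) (1 + b / x ^ 2) x :=
  ((hasDerivAt_id x).sub ((hasDerivAt_const x b).div (hasDerivAt_id x) hx)).congr_deriv
    (by simp only [id]; ring)

lemma hasDerivAt_div {x : ℝ} (hx : x ≠ 0) :
    HasDerivAt (fun u : ℝ => b / u) (-(b / x ^ 2)) x :=
  ((hasDerivAt_const x b).div (hasDerivAt_id x) hx).congr_deriv (by simp only [id]; ring)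

variable {E : Type*} [NormedAddCommGroup E] [NormedSpace ℝ E]

lemma integral_eq_two_smul_integral_Ioi_of_even {g : ℝ → E} (hg : Integrable g)
    (heven : ∀ v, g (-v) = g v) :
    ∫ v, g v = (2 : ℝ) • ∫ v in Ioi 0, g v := by
  have hIic : ∫ v in Iic 0, g v = ∫ v in Ioi 0, g v := by
    simpa only [neg_zero, heven] using (integral_comp_neg_Ioi 0 g).symm
  rw [← integral_add_compl measurableSet_Ioi hg, compl_Ioi, hIic, two_smul]

theorem integral_Ioi_comp_sub_div {g : ℝ → E} (hg : Integrable g) (heven : ∀ v, g (-v) = g v)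
    (hb : 0 < b) : ∫ u in Ioi 0, g (u - b / u) = ∫ v in Ioi 0, g v := by
  have hφ' : ∀ x ∈ Ioi (0 : ℝ),
      HasDerivWithinAt (fun u => u - b / u) (1 + b / x ^ 2) (Ioi 0) x :=
    fun x hx => (hasDerivAt_sub_div (ne_of_gt hx)).hasDerivWithinAt
  have hφinj := (strictMonoOn_sub_div hb.le).injOn
  have hψ' : ∀ x ∈ Ioi (0 : ℝ), HasDerivWithinAt (fun u => b / u) (-(b / x ^ 2)) (Ioi 0) x :=
    fun x hx => (hasDerivAt_div (ne_of_gt hx)).hasDerivWithinAt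
  have hψinj : InjOn (fun u : ℝ => b / u) (Ioi 0) := fun x _ y _ h => by
    simpa only [div_div_cancel₀ hb.ne'] using congrArg (b / ·) h
  have habs : ∀ x : ℝ, |1 + b / x ^ 2| = 1 + b / x ^ 2 := fun x => abs_of_pos (by positivity)
  have hfull := integral_image_eq_integral_abs_deriv_smul measurableSet_Ioi hφ' hφinj g
  have hint :=
    (integrableOn_image_iff_integrableOn_abs_deriv_smul measurableSet_Ioi hφ' hφinj g).1
  rw [image_Ioi_sub_div hb] at hfull hint
  simp only [habs, Measure.restrict_univ] at hfull hint
  have hint₁ : IntegrableOn (fun u => g (u - b / u)) (Ioi 0) := by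
    have := (hint hg.integrableOn).bdd_smul 1 (φ := fun u : ℝ => (1 + b / u ^ 2)⁻¹)
      (by fun_prop : Measurable fun u : ℝ => (1 + b / u ^ 2)⁻¹).aestronglyMeasurable
      (Eventually.of_forall fun u => ?_)
    · refine this.congr (Eventually.of_forall fun u => ?_)
      exact inv_smul_smul₀ (by positivity : (1 + b / u ^ 2) ≠ 0) _
    · rw [norm_inv, Real.norm_of_nonneg (by positivity)]
      exact inv_le_one_of_one_le₀ (le_add_of_nonneg_right (by positivity))
  have hint₂ : IntegrableOn (fun u => (b / u ^ 2) • g (u - b / u)) (Ioi 0) := by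
    refine ((hint hg.integrableOn).sub hint₁).congr (Eventually.of_forall fun u => ?_)
    simp only [Pi.sub_apply, add_smul, one_smul, add_sub_cancel_left]
  have hsymm : ∫ u in Ioi 0, (b / u ^ 2) • g (u - b / u) = ∫ u in Ioi 0, g (u - b / u) := by
    have := integral_image_eq_integral_abs_deriv_smul measurableSet_Ioi hψ' hψinj
      (fun u => g (u - b / u))
    rw [image_Ioi_div hb] at this
    rw [this]
    refine setIntegral_congr_fun measurableSet_Ioi fun x hx => ?_
    have hx : x ≠ 0 := ne_of_gt hx
    rw [abs_neg, abs_of_nonneg (by positivity), ← heven]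
    congr 2
    field_simp
    ring
  refine smul_right_injective E (two_ne_zero' ℝ) ?_
  dsimp only
  rw [← integral_eq_two_smul_integral_Ioi_of_even hg heven, hfull, two_smul]
  nth_rw 2 [← hsymm]
  rw [← integral_add hint₁ hint₂]
  simp only [add_smul, one_smul]

end CauchySchlomilch

lemma integral_exp_neg_sub_div_mul_rpow_neg_half {x : ℝ} (hx : 0 < x) :
    ∫ t in Ioi 0, Real.exp (-t - x / t) * t ^ (-(1 : ℝ) / 2) = √π * Real.exp (-(2 * √x)) := by
  set b := √x
  have hb : 0 < b := Real.sqrt_pos.mpr hx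
  have hb2 : b ^ 2 = x := Real.sq_sqrt hx.le
  -- substituting `t = u²` completes the square: `u² + b²/u² = (u - b/u)² + 2b`
  have hsubst : ∀ u ∈ Ioi (0 : ℝ),
      ((2 : ℝ) * u ^ ((2 : ℝ) - 1)) • (Real.exp (-u ^ (2 : ℝ) - x / u ^ (2 : ℝ)) *
        (u ^ (2 : ℝ)) ^ (-(1 : ℝ) / 2))
        = 2 * Real.exp (-(2 * b)) * Real.exp (-1 * (u - b / u) ^ 2) := by
    intro u hu
    have hu : 0 < u := hu
    have hsq : (u ^ (2 : ℝ)) ^ (-(1 : ℝ) / 2) = u⁻¹ := by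
      rw [← Real.rpow_mul hu.le]
      norm_num [Real.rpow_neg_one]
    have hexp : -u ^ 2 - x / u ^ 2 = -(2 * b) + -1 * (u - b / u) ^ 2 := by
      rw [← hb2]
      field_simp
      ring
    rw [hsq, smul_eq_mul, Real.rpow_two, hexp, Real.exp_add, show (2 : ℝ) - 1 = 1 by norm_num,
      Real.rpow_one]
    field_simp
  have hgauss := integral_Ioi_comp_sub_div (integrable_exp_neg_mul_sq one_pos)
    (fun v => by rw [neg_sq]) hb
  rw [← integral_comp_rpow_Ioi_of_pos two_pos, setIntegral_congr_fun measurableSet_Ioi hsubst,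
    integral_const_mul, hgauss, integral_gaussian_Ioi, div_one]
  ring

lemma exp_neg_le_factorial_div_pow {y : ℝ} (hy : 0 < y) (n : ℕ) :
    Real.exp (-y) ≤ n.factorial / y ^ n := by
  rw [Real.exp_neg, ← inv_div]
  exact inv_anti₀ (by positivity) (Real.pow_div_factorial_le_exp y hy.le n)

lemma integrableOn_exp_neg_sub_div_mul_rpow {ε : ℝ} (hε : 0 < ε) (r : ℝ) :
    IntegrableOn (fun t : ℝ => Real.exp (-t - ε / t) * t ^ r) (Ioi 0) := by
  obtain ⟨n, hn⟩ := exists_nat_gt (-r)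
  have hgamma : IntegrableOn (fun t : ℝ => n.factorial / ε ^ n * (Real.exp (-t) * t ^ (r + n)))
      (Ioi 0) := by
    have := Real.GammaIntegral_convergent (s := r + n + 1) (by linarith)
    rw [add_sub_cancel_right] at this
    exact this.const_mul _
  refine hgamma.mono' ?_
    ((ae_restrict_iff' measurableSet_Ioi).2 (Eventually.of_forall fun t ht => ?_))
  · refine ContinuousOn.aestronglyMeasurable ?_ measurableSet_Ioi
    fun_prop (disch := exact fun t ht => ne_of_gt ht)
  have ht : 0 < t := ht
  rw [Real.norm_of_nonneg (by positivity), sub_eq_add_neg, Real.exp_add,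
    Real.rpow_add_natCast ht.ne']
  calc Real.exp (-t) * Real.exp (-(ε / t)) * t ^ r
      ≤ Real.exp (-t) * (n.factorial / (ε / t) ^ n) * t ^ r := by
        gcongr
        exact exp_neg_le_factorial_div_pow (by positivity) n
    _ = n.factorial / ε ^ n * (Real.exp (-t) * (t ^ r * t ^ n)) := by
        rw [div_pow]
        field_simp

lemma norm_cexp_neg_sub_div_mul_cpow (z s : ℂ) {t : ℝ} (ht : 0 < t) :
    ‖cexp (-(t : ℂ) - z / t) * (t : ℂ) ^ s‖ = Real.exp (-t - z.re / t) * t ^ s.re := by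
  rw [norm_mul, norm_exp, norm_cpow_eq_rpow_re_of_pos ht, sub_re, neg_re, ofReal_re,
    div_ofReal_re]

lemma continuousOn_cexp_neg_sub_div_mul_cpow (z s : ℂ) :
    ContinuousOn (fun t : ℝ => cexp (-(t : ℂ) - z / t) * (t : ℂ) ^ s) (Ioi 0) := by
  refine ContinuousOn.mul (by fun_prop (disch := exact fun t ht => ofReal_ne_zero.2 (ne_of_gt ht)))
    (continuous_ofReal.continuousOn.cpow_const fun t ht => ofReal_mem_slitPlane.2 ht)

lemma integrableOn_cexp_neg_sub_div_mul_cpow {z : ℂ} (hz : 0 < z.re) (s : ℂ) :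
    IntegrableOn (fun t : ℝ => cexp (-(t : ℂ) - z / t) * (t : ℂ) ^ s) (Ioi 0) := by
  refine (integrableOn_exp_neg_sub_div_mul_rpow hz s.re).mono'
    ((continuousOn_cexp_neg_sub_div_mul_cpow z s).aestronglyMeasurable measurableSet_Ioi)
    ((ae_restrict_iff' measurableSet_Ioi).2 (Eventually.of_forall fun t ht => ?_))
  exact (norm_cexp_neg_sub_div_mul_cpow z s ht).le

lemma hasDerivAt_cexp_neg_sub_div_mul_cpow (s w : ℂ) {t : ℝ} (ht : 0 < t) :
    HasDerivAt (fun w => cexp (-(t : ℂ) - w / t) * (t : ℂ) ^ s)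
      (-(cexp (-(t : ℂ) - w / t) * (t : ℂ) ^ (s - 1))) w := by
  have ht' : (t : ℂ) ≠ 0 := ofReal_ne_zero.2 ht.ne'
  have := ((((hasDerivAt_id' w).div_const (t : ℂ)).const_sub (-(t : ℂ))).cexp).mul_const
    ((t : ℂ) ^ s)
  refine this.congr_deriv ?_
  rw [cpow_sub _ _ ht', cpow_one]
  ring

lemma hasDerivAt_integral_cexp_neg_sub_div_mul_cpow {z : ℂ} (hz : 0 < z.re) (s : ℂ) :
    HasDerivAt (fun w => ∫ t in Ioi (0 : ℝ), cexp (-(t : ℂ) - w / t) * (t : ℂ) ^ s)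
      (-∫ t in Ioi (0 : ℝ), cexp (-(t : ℂ) - z / t) * (t : ℂ) ^ (s - 1)) z := by
  have hnhds : {w : ℂ | z.re / 2 < w.re} ∈ 𝓝 z :=
    (isOpen_lt continuous_const continuous_re).mem_nhds (by simpa using half_lt_self hz)
  rw [← integral_neg]
  refine (hasDerivAt_integral_of_dominated_loc_of_deriv_le hnhds
    (F' := fun w t => -(cexp (-(t : ℂ) - w / t) * (t : ℂ) ^ (s - 1)))
    (Eventually.of_forall fun w =>
      (continuousOn_cexp_neg_sub_div_mul_cpow w s).aestronglyMeasurable measurableSet_Ioi)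
    (integrableOn_cexp_neg_sub_div_mul_cpow hz s)
    ((continuousOn_cexp_neg_sub_div_mul_cpow z _).aestronglyMeasurable measurableSet_Ioi).neg
    ?_ (integrableOn_exp_neg_sub_div_mul_rpow (half_pos hz) (s - 1).re) ?_).2
  · refine (ae_restrict_iff' measurableSet_Ioi).2 (Eventually.of_forall fun t ht w hw => ?_)
    have ht : 0 < t := ht
    rw [norm_neg, norm_cexp_neg_sub_div_mul_cpow w _ ht]
    gcongr
    exact hw.le
  · exact (ae_restrict_iff' measurableSet_Ioi).2 (Eventually.of_forall fun t ht w _ =>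
      hasDerivAt_cexp_neg_sub_div_mul_cpow s w ht)

lemma eqOn_re_pos_of_eq_ofReal {E : Type*} [NormedAddCommGroup E] [NormedSpace ℂ E]
    [CompleteSpace E] {f g : ℂ → E}
    (hf : DifferentiableOn ℂ f {z | 0 < z.re}) (hg : DifferentiableOn ℂ g {z | 0 < z.re})
    (h : ∀ x : ℝ, 0 < x → f x = g x) : EqOn f g {z | 0 < z.re} := by
  have hU : IsOpen {z : ℂ | 0 < z.re} := isOpen_lt continuous_const continuous_re
  refine (hf.analyticOnNhd hU).eqOn_of_preconnected_of_frequently_eq (hg.analyticOnNhd hU)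
    (convex_halfSpace_re_gt 0).isPreconnected (by simp : (1 : ℂ) ∈ _) ?_
  have hlim : Tendsto (fun x : ℝ => (x : ℂ)) (𝓝[>] 1) (𝓝[≠] 1) := by
    refine tendsto_nhdsWithin_iff.2 ⟨?_, eventually_nhdsWithin_of_forall fun x hx => ?_⟩
    · exact (continuous_ofReal.tendsto' 1 1 ofReal_one).mono_left nhdsWithin_le_nhds
    · exact ofReal_ne_one.2 (ne_of_gt hx)
  have hpos : ∀ᶠ x : ℝ in 𝓝[>] 1, f x = g x :=
    eventually_nhdsWithin_of_forall fun x hx => h x (one_pos.trans hx)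
  exact hlim.frequently hpos.frequently

lemma hasDerivAt_cexp_neg_two_mul_cpow_half {w : ℂ} (hw : w ∈ slitPlane) :
    HasDerivAt (fun w => cexp (-2 * w ^ ((1 : ℂ) / 2)))
      (-(cexp (-2 * w ^ ((1 : ℂ) / 2)) / w ^ ((1 : ℂ) / 2))) w := by
  refine (((hasStrictDerivAt_cpow_const hw).hasDerivAt.const_mul (-2)).cexp).congr_deriv ?_
  rw [show (1 : ℂ) / 2 - 1 = -(1 / 2) by norm_num, cpow_neg]
  ring

lemma integral_cexp_neg_sub_div_mul_cpow_neg_half_ofReal {x : ℝ} (hx : 0 < x) :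
    ∫ t in Ioi (0 : ℝ), cexp (-(t : ℂ) - x / t) * (t : ℂ) ^ (-(1 : ℂ) / 2)
      = (√π : ℂ) * cexp (-2 * (x : ℂ) ^ ((1 : ℂ) / 2)) := by
  have hint : ∀ t ∈ Ioi (0 : ℝ), cexp (-(t : ℂ) - x / t) * (t : ℂ) ^ (-(1 : ℂ) / 2)
      = ((Real.exp (-t - x / t) * t ^ (-(1 : ℝ) / 2) : ℝ) : ℂ) := fun t ht => by
    rw [ofReal_mul, ofReal_exp, ofReal_cpow (le_of_lt ht)]
    push_cast
    rfl
  rw [setIntegral_congr_fun measurableSet_Ioi hint, integral_complex_ofReal,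
    integral_exp_neg_sub_div_mul_rpow_neg_half hx]
  have hsqrt : (x : ℂ) ^ ((1 : ℂ) / 2) = (√x : ℂ) := by
    rw [Real.sqrt_eq_rpow, ofReal_cpow hx.le]
    norm_num
  rw [hsqrt]
  push_cast
  ring_nf

/-- For `Re z > 0`, `∫₀^∞ e^{-t-z/t} t^{-1/2} dt = √π e^{-2√z}`
(i.e. `U_{-1/2}(z) = e^{-2√z}`) and `∫₀^∞ e^{-t-z/t} t^{-3/2} dt = √π e^{-2√z}/√z`
(i.e. `U_{1/2}(z) = e^{-2√z}/√z`), with principal square roots. -/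
theorem stmt_8 (z : ℂ) (hz : 0 < z.re) :
    (∫ t in Set.Ioi (0 : ℝ),
        Complex.exp (-(t : ℂ) - z / (t : ℂ)) * (t : ℂ) ^ (-(1 : ℂ) / 2))
      = ((Real.sqrt Real.pi : ℝ) : ℂ) * Complex.exp (-2 * z ^ ((1 : ℂ) / 2)) ∧
    (∫ t in Set.Ioi (0 : ℝ),
        Complex.exp (-(t : ℂ) - z / (t : ℂ)) * (t : ℂ) ^ (-(3 : ℂ) / 2))
      = ((Real.sqrt Real.pi : ℝ) : ℂ) * Complex.exp (-2 * z ^ ((1 : ℂ) / 2)) /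
          z ^ ((1 : ℂ) / 2) := by
  set F := fun w : ℂ => ∫ t in Ioi (0 : ℝ), cexp (-(t : ℂ) - w / t) * (t : ℂ) ^ (-(1 : ℂ) / 2)
  set R := fun w : ℂ => (√π : ℂ) * cexp (-2 * w ^ ((1 : ℂ) / 2))
  have hF : ∀ w : ℂ, 0 < w.re → HasDerivAt F
      (-∫ t in Ioi (0 : ℝ), cexp (-(t : ℂ) - w / t) * (t : ℂ) ^ (-(3 : ℂ) / 2)) w := by
    intro w hw
    simpa only [show -(1 : ℂ) / 2 - 1 = -(3 : ℂ) / 2 by norm_num] using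
      hasDerivAt_integral_cexp_neg_sub_div_mul_cpow hw (-(1 : ℂ) / 2)
  have hR : ∀ w : ℂ, 0 < w.re → HasDerivAt R
      ((√π : ℂ) * -(cexp (-2 * w ^ ((1 : ℂ) / 2)) / w ^ ((1 : ℂ) / 2))) w := fun w hw =>
    (hasDerivAt_cexp_neg_two_mul_cpow_half (Or.inl hw)).const_mul _
  have hFR : EqOn F R {w | 0 < w.re} :=
    eqOn_re_pos_of_eq_ofReal (fun w hw => (hF w hw).differentiableAt.differentiableWithinAt)
      (fun w hw => (hR w hw).differentiableAt.differentiableWithinAt)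
      (fun x hx => integral_cexp_neg_sub_div_mul_cpow_neg_half_ofReal hx)
  refine ⟨hFR hz, ?_⟩
  have hFR_nhds : F =ᶠ[𝓝 z] R :=
    eventuallyEq_of_mem ((isOpen_lt continuous_const continuous_re).mem_nhds hz) hFR
  have := (hF z hz).unique ((hR z hz).congr_of_eventuallyEq hFR_nhds)
  linear_combination -this
end

section
/- For every integer m ∈ ℤ and every z ∈ ℂ with z ≠ 0, 𝐅_m(z) = z^{-m} 𝐅_{-m}(z), i.e. ∑_{n=0}^∞ z^n/(Γ(m+1+n)·n!) = z^{-m} ∑_{n=0}^∞ z^n/(Γ(-m+1+n)·n!). -/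
open Complex

/-! For `m ∈ ℕ` the first `m` terms of `𝐅_{-m}` vanish, because `Γ(-m+1+n)` has a pole for
`n < m`. Reindexing the rest by `n = m + k` turns `Γ(k+1) (m+k)!` into `Γ(m+k+1) k!`, so that
`𝐅_{-m}(z) = z^m 𝐅_m(z)`; the case of negative `m` follows by dividing by `z^m`. -/

noncomputable def olverHyp0F1 (a z : ℂ) : ℂ :=
  ∑' n : ℕ, z ^ n / (Gamma (a + 1 + n) * n.factorial)

lemma Gamma_neg_natCast_add_one_add_natCast_eq_zero {m n : ℕ} (hnm : n < m) :
    Gamma (-(m : ℂ) + 1 + n) = 0 := by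
  have : -(m : ℂ) + 1 + n = -((m - 1 - n : ℕ) : ℂ) := by
    push_cast [Nat.cast_sub (by omega : n ≤ m - 1), Nat.cast_sub (by omega : 1 ≤ m)]
    ring
  rw [this, Gamma_neg_nat_eq_zero]

lemma olverHyp0F1_term_neg_natCast_add (m k : ℕ) (z : ℂ) :
    z ^ (m + k) / (Gamma (-(m : ℂ) + 1 + (m + k : ℕ)) * (m + k).factorial)
      = z ^ m * (z ^ k / (Gamma ((m : ℂ) + 1 + k) * k.factorial)) := by
  have hlow : -(m : ℂ) + 1 + (m + k : ℕ) = k + 1 := by push_cast; ring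
  have hhigh : (m : ℂ) + 1 + k = (m + k : ℕ) + 1 := by push_cast; ring
  rw [hlow, hhigh, Gamma_nat_eq_factorial, Gamma_nat_eq_factorial, pow_add]
  field_simp

lemma olverHyp0F1_neg_natCast (m : ℕ) (z : ℂ) :
    olverHyp0F1 (-m) z = z ^ m * olverHyp0F1 m z := by
  have hsupp : Function.support (fun n : ℕ => z ^ n / (Gamma (-(m : ℂ) + 1 + n) * n.factorial))
      ⊆ Set.range (m + ·) := by
    intro n hn
    by_contra hcon
    have hnm : n < m := by
      by_contra hmn
      exact hcon ⟨n - m, Nat.add_sub_of_le (not_lt.mp hmn)⟩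
    simp [Gamma_neg_natCast_add_one_add_natCast_eq_zero hnm] at hn
  unfold olverHyp0F1
  rw [← (add_right_injective m).tsum_eq hsupp, ← tsum_mul_left]
  exact tsum_congr (olverHyp0F1_term_neg_natCast_add m · z)

/-- For every `m ∈ ℤ` and `z ≠ 0`, `𝐅_m(z) = z^{-m} 𝐅_{-m}(z)`, i.e.
`∑_{n} z^n/(Γ(m+1+n)·n!) = z^{-m} ∑_{n} z^n/(Γ(-m+1+n)·n!)`. (Mathlib's
`Complex.Gamma` vanishes at nonpositive integers, implementing `1/Γ = 0` there.) -/
theorem stmt_11 (m : ℤ) (z : ℂ) (hz : z ≠ 0) :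
    (∑' n : ℕ, z ^ n / (Complex.Gamma ((m : ℂ) + 1 + (n : ℂ)) * (n.factorial : ℂ)))
      = z ^ (-m) *
        ∑' n : ℕ, z ^ n / (Complex.Gamma (-(m : ℂ) + 1 + (n : ℂ)) * (n.factorial : ℂ)) := by
  change olverHyp0F1 m z = z ^ (-m) * olverHyp0F1 (-m) z
  obtain ⟨k, rfl | rfl⟩ := Int.eq_nat_or_neg m
  · rw [Int.cast_natCast, olverHyp0F1_neg_natCast, zpow_neg, zpow_natCast,
      inv_mul_cancel_left₀ (pow_ne_zero k hz)]
  · rw [Int.cast_neg, Int.cast_natCast, neg_neg, neg_neg, zpow_natCast, olverHyp0F1_neg_natCast]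
end

section
/- For every t ∈ ℂ with t ≠ 0 and every z ∈ ℂ, the two-sided series ∑_{m ∈ ℤ} t^m 𝐅_m(z) converges absolutely and e^{t + z/t} = ∑_{m ∈ ℤ} t^m 𝐅_m(z). -/
open Complex

/-- The Olver-normalized ₀F₁ hypergeometric function
`𝐅_α(z) = ∑_{j=0}^∞ z^j/(Γ(α+1+j)·j!)`. (Mathlib's `Complex.Gamma` vanishes at the
nonpositive integers, so division by it implements the convention `1/Γ = 0` there.) -/
noncomputable def FOlver (α z : ℂ) : ℂ :=
  ∑' j : ℕ, z ^ j / (Complex.Gamma (α + 1 + (j : ℂ)) * (j.factorial : ℂ))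

/-!
Multiply the exponential series of `e^t` and `e^{z/t}`. The term `t^k/k! · (z/t)^n/n!` equals
`t^m · z^n/(Γ(m+1+n) n!)` with `m = k - n`, so regrouping the absolutely convergent double
series along `m` produces `t^m 𝐅_m(z)`. Conversely every pair `(m, n)` with `m + n ≥ 0` arises
this way, while the pairs with `m + n < 0` contribute nothing since `1/Γ` vanishes there.
-/

open Nat

noncomputable def FOlverTerm (α z : ℂ) (j : ℕ) : ℂ :=
  z ^ j / (Gamma (α + 1 + j) * j !)

lemma FOlverTerm_intCast_eq_zero (z : ℂ) {m : ℤ} {j : ℕ} (h : m + j < 0) :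
    FOlverTerm m z j = 0 := by
  obtain ⟨n, hn⟩ : ∃ n : ℕ, m + 1 + j = -(n : ℤ) := ⟨(-(m + 1 + j)).toNat, by omega⟩
  have hGamma : Gamma ((m : ℂ) + 1 + j) = 0 := by
    rw [← Gamma_neg_nat_eq_zero n]
    exact_mod_cast congrArg Gamma (congrArg (fun k : ℤ => (k : ℂ)) hn)
  rw [FOlverTerm, hGamma, zero_mul, div_zero]

lemma zpow_sub_mul_FOlverTerm {t : ℂ} (ht : t ≠ 0) (z : ℂ) (k n : ℕ) :
    t ^ ((k : ℤ) - n) * FOlverTerm (((k : ℤ) - n : ℤ) : ℂ) z n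
      = t ^ k / k ! * ((z / t) ^ n / n !) := by
  have hGamma : Gamma ((((k : ℤ) - n : ℤ) : ℂ) + 1 + n) = k ! := by
    rw [← Gamma_nat_eq_factorial]
    push_cast
    ring_nf
  rw [FOlverTerm, hGamma, zpow_sub₀ ht, zpow_natCast, zpow_natCast, div_pow]
  field_simp

lemma summable_norm_pow_div_factorial (w : ℂ) : Summable fun n : ℕ => ‖w ^ n / (n ! : ℂ)‖ := by
  simpa only [norm_div, norm_pow, norm_natCast] using Real.summable_pow_div_factorial ‖w‖

lemma hasSum_pow_div_factorial (w : ℂ) : HasSum (fun n : ℕ => w ^ n / (n ! : ℂ)) (exp w) := by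
  rw [exp_eq_exp_ℂ]
  exact NormedSpace.expSeries_div_hasSum_exp w

lemma summable_norm_pow_div_factorial_mul (x y : ℂ) :
    Summable fun p : ℕ × ℕ => ‖x ^ p.1 / (p.1 ! : ℂ) * (y ^ p.2 / (p.2 ! : ℂ))‖ :=
  Summable.mul_norm (f := fun n : ℕ => x ^ n / (n ! : ℂ)) (g := fun n : ℕ => y ^ n / (n ! : ℂ))
    (summable_norm_pow_div_factorial x) (summable_norm_pow_div_factorial y)

lemma hasSum_pow_div_factorial_mul (x y : ℂ) :
    HasSum (fun p : ℕ × ℕ => x ^ p.1 / (p.1 ! : ℂ) * (y ^ p.2 / (p.2 ! : ℂ))) (exp (x + y)) := by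
  rw [exp_add]
  exact HasSum.mul (f := fun n : ℕ => x ^ n / (n ! : ℂ)) (g := fun n : ℕ => y ^ n / (n ! : ℂ))
    (hasSum_pow_div_factorial x) (hasSum_pow_div_factorial y)
    (summable_norm_pow_div_factorial_mul x y).of_norm

def toLaurentIndex (q : ℕ × ℕ) : ℤ × ℕ := ((q.1 : ℤ) - q.2, q.2)

lemma toLaurentIndex_injective : Function.Injective toLaurentIndex := by
  rintro ⟨k, n⟩ ⟨k', n'⟩ h
  simp only [toLaurentIndex, Prod.mk.injEq] at h ⊢
  omega

lemma FOlverTerm_eq_zero_of_notMem_range {p : ℤ × ℕ} (z : ℂ)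
    (hp : p ∉ Set.range toLaurentIndex) :
    FOlverTerm p.1 z p.2 = 0 := by
  refine FOlverTerm_intCast_eq_zero z (not_le.mp fun h => hp ⟨((p.1 + p.2).toNat, p.2), ?_⟩)
  ext
  · simp only [toLaurentIndex]
    omega
  · rfl

lemma hasSum_zpow_mul_FOlverTerm {t : ℂ} (ht : t ≠ 0) (z : ℂ) :
    HasSum (fun p : ℤ × ℕ => t ^ p.1 * FOlverTerm p.1 z p.2) (exp (t + z / t)) := by
  refine (toLaurentIndex_injective.hasSum_iff fun p hp => ?_).mp ?_
  · rw [FOlverTerm_eq_zero_of_notMem_range z hp, mul_zero]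
  · simpa only [Function.comp_def, toLaurentIndex, zpow_sub_mul_FOlverTerm ht] using
      hasSum_pow_div_factorial_mul t (z / t)

lemma summable_norm_zpow_mul_FOlverTerm {t : ℂ} (ht : t ≠ 0) (z : ℂ) :
    Summable fun p : ℤ × ℕ => ‖t ^ p.1 * FOlverTerm p.1 z p.2‖ := by
  refine (toLaurentIndex_injective.summable_iff fun p hp => ?_).mp ?_
  · rw [FOlverTerm_eq_zero_of_notMem_range z hp, mul_zero, norm_zero]
  · simpa only [Function.comp_def, toLaurentIndex, zpow_sub_mul_FOlverTerm ht] using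
      summable_norm_pow_div_factorial_mul t (z / t)

/-- the generating function: for `t ≠ 0` and any `z`, the two-sided
series `∑_{m ∈ ℤ} t^m 𝐅_m(z)` converges absolutely and
`e^{t + z/t} = ∑_{m ∈ ℤ} t^m 𝐅_m(z)`. -/
theorem stmt_12 (t : ℂ) (ht : t ≠ 0) (z : ℂ) :
    Summable (fun m : ℤ => ‖t ^ m * FOlver (m : ℂ) z‖) ∧
    Complex.exp (t + z / t) = ∑' m : ℤ, t ^ m * FOlver (m : ℂ) z := by
  have hF := hasSum_zpow_mul_FOlverTerm ht z
  have hFnorm := summable_norm_zpow_mul_FOlverTerm ht z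
  have hfiber (m : ℤ) :
      HasSum (fun j => t ^ m * FOlverTerm m z j) (t ^ m * FOlver m z) := by
    rw [FOlver, ← tsum_mul_left]
    exact (hF.summable.prod_factor m).hasSum
  refine ⟨hFnorm.prod.of_nonneg_of_le (fun _ => norm_nonneg _) fun m => ?_,
    (hF.prod_fiberwise hfiber).tsum_eq.symm⟩
  rw [← (hfiber m).tsum_eq]
  exact norm_tsum_le_tsum_norm (hFnorm.prod_factor m)
end

section
/- Let α ∈ ℂ be such that neither α+1 nor 2α+1 is a nonpositive integer, and let z ∈ ℂ with z ∉ (−∞,0). Then, for either choice of sign, ∑_{j=0}^∞ z^j/((α+1)_j · j!) = e^{∓2√z} ∑_{n=0}^∞ (α+1/2)_n (±4√z)^n / ((2α+1)_n · n!), where √z is the principal square root and both series converge absolutely (Kummer's second transformation: F_α(z) = e^{∓2√z} ₁F₁(α+1/2; 2α+1; ±4√z)). -/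
/-!
Put `a = α + 1/2` and `r = ±√z`, so that `r² = z`. The formal power series
`Y = e^{-2x} · ₁F₁(a; 2a; 4x)` satisfies `x Y'' + 2a Y' = 4 x Y`, since multiplying by `e^{-2x}`
transforms Kummer's equation with `c = 2a` into this one. Comparing coefficients gives a two-step
recurrence with `Y(0) = 1` and `Y'(0) = 0`, whose only solution is `Y(x) = F_α(x²)`. Both factors
converge absolutely at `r`, so the Cauchy product evaluates `Y` at `r` to the product of their
values.
-/

open Filter Topology Finset PowerSeries Nat

theorem ascPochhammer_eval_ne_zero {S : Type*} [Semiring S] [Nontrivial S] [NoZeroDivisors S]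
    {a : S} (ha : ∀ k : ℕ, a + k ≠ 0) (n : ℕ) : (ascPochhammer S n).eval a ≠ 0 := by
  induction n with
  | zero => simp
  | succ n ih => rw [ascPochhammer_succ_eval]; exact mul_ne_zero ih (ha n)

section CommRing

variable {R : Type*} [CommRing R]

section ODE

variable {c μ : R} {Y : R⟦X⟧}

theorem coeff_one_of_ode (hY : X * d⁄dX R (d⁄dX R Y) + C c * d⁄dX R Y = C μ * (X * Y)) :
    c * coeff 1 Y = 0 := by
  have h := congrArg (coeff 0) hY
  simp only [map_add, coeff_zero_X_mul, coeff_C_mul, coeff_derivative, mul_zero] at h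
  linear_combination h

theorem coeff_add_two_of_ode (hY : X * d⁄dX R (d⁄dX R Y) + C c * d⁄dX R Y = C μ * (X * Y))
    (n : ℕ) : (n + 2) * (c + n + 1) * coeff (n + 2) Y = μ * coeff n Y := by
  have h := congrArg (coeff (n + 1)) hY
  simp only [map_add, coeff_succ_X_mul, coeff_C_mul, coeff_derivative] at h
  push_cast at h
  linear_combination h

end ODE

-- Multiplying by `e^{mx}` removes the term `λ x B'` of Kummer's equation exactly when `λ = -2m`,
-- and the term `λ a B` exactly when `c = 2a`.
theorem ode_mul_of_kummer_ode {a m : R} {E B : R⟦X⟧}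
    (hE : d⁄dX R E = C m * E)
    (hB : X * d⁄dX R (d⁄dX R B) + (C (2 * a) - C (-2 * m) * X) * d⁄dX R B =
      C (-2 * m * a) * B) :
    X * d⁄dX R (d⁄dX R (E * B)) + C (2 * a) * d⁄dX R (E * B) = C (m ^ 2) * (X * (E * B)) := by
  simp only [Derivation.leibniz, smul_eq_mul, hE, map_add, derivative_C, mul_zero, add_zero]
  simp only [map_mul, map_neg, map_pow, map_ofNat] at hB ⊢
  linear_combination E * hB

theorem coeff_mul_mul_pow (f g : R⟦X⟧) (w : R) (n : ℕ) :
    coeff n (f * g) * w ^ n =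
      ∑ p ∈ antidiagonal n, coeff p.1 f * w ^ p.1 * (coeff p.2 g * w ^ p.2) := by
  rw [coeff_mul, sum_mul]
  refine sum_congr rfl fun p hp ↦ ?_
  rw [← mem_antidiagonal.mp hp, pow_add]
  ring

end CommRing

section Field

variable {K : Type*} [Field K]

noncomputable def kummerSeries (a c lam : K) : K⟦X⟧ :=
  mk fun n ↦ (ascPochhammer K n).eval a * lam ^ n / ((ascPochhammer K n).eval c * n !)

variable [CharZero K]

section Recurrence

variable {c μ : K} {Y : K⟦X⟧}

theorem coeff_two_mul_add_one_of_ode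
    (hY : X * d⁄dX K (d⁄dX K Y) + C c * d⁄dX K Y = C μ * (X * Y)) (hc : ∀ n : ℕ, c + n ≠ 0)
    (j : ℕ) : coeff (2 * j + 1) Y = 0 := by
  induction j with
  | zero =>
    simpa using (mul_eq_zero.mp (coeff_one_of_ode hY)).resolve_left (by simpa using hc 0)
  | succ j ih =>
    have h := coeff_add_two_of_ode hY (2 * j + 1)
    rw [ih, mul_zero] at h
    have hne : ((2 * j + 1 : ℕ) + 2 : K) * (c + (2 * j + 1 : ℕ) + 1) ≠ 0 :=
      mul_ne_zero (by norm_cast) (by convert hc (2 * j + 2) using 1; push_cast; ring)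
    simpa [show 2 * (j + 1) + 1 = 2 * j + 1 + 2 by ring] using
      (mul_eq_zero.mp h).resolve_left hne

theorem coeff_two_mul_of_ode
    (hY : X * d⁄dX K (d⁄dX K Y) + C c * d⁄dX K Y = C μ * (X * Y)) (hc : ∀ n : ℕ, c + n ≠ 0)
    (j : ℕ) : coeff (2 * j) Y =
      coeff 0 Y * (μ / 4) ^ j / ((ascPochhammer K j).eval ((c + 1) / 2) * j !) := by
  have hc' : ∀ k : ℕ, (c + 1) / 2 + k ≠ 0 := fun k h ↦
    hc (2 * k + 1) (by push_cast; linear_combination 2 * h)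
  induction j with
  | zero => simp
  | succ j ih =>
    have h := coeff_add_two_of_ode hY (2 * j)
    rw [ih] at h
    push_cast at h
    have hc₁ : c + 2 * j + 1 ≠ 0 := by convert hc (2 * j + 1) using 1; push_cast; ring
    have hP := ascPochhammer_eval_ne_zero hc' j
    apply mul_left_cancel₀ (mul_ne_zero (by norm_cast : (2 * j + 2 : K) ≠ 0) hc₁)
    rw [show 2 * (j + 1) = 2 * j + 2 by ring, h, ascPochhammer_succ_eval, factorial_succ,
      show (c + 1) / 2 + ((j : ℕ) : K) = (c + 2 * j + 1) / 2 by ring]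
    push_cast
    field_simp
    ring

end Recurrence

theorem coeff_succ_kummerSeries (a lam : K) {c : K} (hc : ∀ n : ℕ, c + n ≠ 0) (n : ℕ) :
    (c + n) * (n + 1) * coeff (n + 1) (kummerSeries a c lam) =
      lam * (a + n) * coeff n (kummerSeries a c lam) := by
  have hP := ascPochhammer_eval_ne_zero hc n
  have hcn := hc n
  simp only [kummerSeries, coeff_mk, ascPochhammer_succ_eval, factorial_succ, pow_succ]
  push_cast
  field_simp

theorem kummerSeries_ode (a lam : K) {c : K} (hc : ∀ n : ℕ, c + n ≠ 0) :
    X * d⁄dX K (d⁄dX K (kummerSeries a c lam)) +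
        (C c - C lam * X) * d⁄dX K (kummerSeries a c lam) =
      C (lam * a) * kummerSeries a c lam := by
  ext n
  rcases n with _ | n
  · have h := coeff_succ_kummerSeries a lam hc 0
    simp only [map_add, map_sub, sub_mul, mul_assoc, coeff_C_mul, coeff_zero_X_mul,
      coeff_derivative]
    push_cast at h ⊢
    linear_combination h
  · have h := coeff_succ_kummerSeries a lam hc (n + 1)
    simp only [map_add, map_sub, sub_mul, mul_assoc, coeff_C_mul, coeff_succ_X_mul,
      coeff_derivative]
    push_cast at h ⊢
    linear_combination h

theorem derivative_rescale_exp (m : K) :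
    d⁄dX K (rescale m (exp K)) = C m * rescale m (exp K) := by
  ext n
  simp only [coeff_derivative, coeff_C_mul, coeff_rescale, coeff_exp, factorial_succ]
  push_cast
  field_simp
  ring

theorem coeff_rescale_exp_mul_pow (m w : K) (n : ℕ) :
    coeff n (rescale m (exp K)) * w ^ n = (m * w) ^ n / n ! := by
  simp [coeff_rescale, coeff_exp, mul_pow, div_eq_mul_inv]
  ring

theorem coeff_two_mul_rescale_exp_mul_kummerSeries (a m : K) (ha : ∀ n : ℕ, 2 * a + n ≠ 0)
    (j : ℕ) : coeff (2 * j) (rescale m (exp K) * kummerSeries a (2 * a) (-2 * m)) =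
      (m ^ 2 / 4) ^ j / ((ascPochhammer K j).eval (a + 1 / 2) * j !) := by
  have hY := ode_mul_of_kummer_ode (derivative_rescale_exp m) (kummerSeries_ode a (-2 * m) ha)
  rw [coeff_two_mul_of_ode hY ha, show (2 * a + 1) / 2 = a + 1 / 2 by ring, coeff_mul]
  simp [coeff_rescale, kummerSeries]

theorem coeff_two_mul_add_one_rescale_exp_mul_kummerSeries (a m : K)
    (ha : ∀ n : ℕ, 2 * a + n ≠ 0) (j : ℕ) :
    coeff (2 * j + 1) (rescale m (exp K) * kummerSeries a (2 * a) (-2 * m)) = 0 :=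
  coeff_two_mul_add_one_of_ode
    (ode_mul_of_kummer_ode (derivative_rescale_exp m) (kummerSeries_ode a (-2 * m) ha)) ha j

end Field

theorem summable_norm_of_succ_eq_mul {𝕜 : Type*} [NormedField 𝕜] {f q : ℕ → 𝕜}
    (hq : Tendsto q atTop (𝓝 0)) (hf : ∀ n, f (n + 1) = q n * f n) :
    Summable fun n ↦ ‖f n‖ := by
  refine summable_of_ratio_norm_eventually_le (r := 1 / 2) (by norm_num) ?_
  filter_upwards [(tendsto_norm_zero.comp hq).eventually (ge_mem_nhds one_half_pos)] with n hn
  simp only [norm_norm, hf, norm_mul]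
  exact mul_le_mul_of_nonneg_right hn (norm_nonneg _)

section Evaluation

variable {𝕜 : Type*} [NormedField 𝕜] {f g : 𝕜⟦X⟧} {w : 𝕜}

theorem summable_norm_coeff_mul_mul_pow (hf : Summable fun n ↦ ‖coeff n f * w ^ n‖)
    (hg : Summable fun n ↦ ‖coeff n g * w ^ n‖) :
    Summable fun n ↦ ‖coeff n (f * g) * w ^ n‖ := by
  simpa only [coeff_mul_mul_pow] using summable_norm_sum_mul_antidiagonal_of_summable_norm hf hg

theorem tsum_coeff_mul_mul_pow [CompleteSpace 𝕜] (hf : Summable fun n ↦ ‖coeff n f * w ^ n‖)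
    (hg : Summable fun n ↦ ‖coeff n g * w ^ n‖) :
    ∑' n, coeff n (f * g) * w ^ n = (∑' n, coeff n f * w ^ n) * ∑' n, coeff n g * w ^ n := by
  simpa only [coeff_mul_mul_pow] using
    (tsum_mul_tsum_eq_tsum_sum_antidiagonal_of_summable_norm hf hg).symm

end Evaluation

theorem summable_norm_coeff_kummerSeries_mul_pow (a lam w : ℂ) {c : ℂ}
    (hc : ∀ n : ℕ, c + n ≠ 0) : Summable fun n ↦ ‖coeff n (kummerSeries a c lam) * w ^ n‖ := by
  refine summable_norm_of_succ_eq_mul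
    (q := fun n ↦ (a + n) / (c + n) * (lam * w) * ((n : ℂ) + 1)⁻¹) ?_ fun n ↦ ?_
  · have h₁ : Tendsto (fun n : ℕ ↦ (a + n) / (c + n)) atTop (𝓝 1) := by
      simpa using tendsto_add_mul_div_add_mul_atTop_nhds a c (1 : ℂ) one_ne_zero
    have h₂ : Tendsto (fun n : ℕ ↦ ((n : ℂ) + 1)⁻¹) atTop (𝓝 0) := by
      simpa [add_comm] using tendsto_add_mul_div_add_mul_atTop_nhds (1 : ℂ) 1 0 one_ne_zero
    simpa using (h₁.mul_const (lam * w)).mul h₂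
  · have h := coeff_succ_kummerSeries a lam hc n
    have hcn := hc n
    have hn : (n + 1 : ℂ) ≠ 0 := by norm_cast
    rw [eq_div_of_mul_eq (mul_ne_zero hcn hn) ((mul_comm _ _).trans h), pow_succ]
    field_simp

theorem summable_norm_coeff_rescale_exp_mul_pow (m w : ℂ) :
    Summable fun n ↦ ‖coeff n (rescale m (exp ℂ)) * w ^ n‖ := by
  refine (Real.summable_pow_div_factorial ‖m * w‖).congr fun n ↦ ?_
  rw [coeff_rescale_exp_mul_pow, norm_div, norm_pow, Complex.norm_natCast]

theorem tsum_coeff_rescale_exp_mul_pow (m w : ℂ) :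
    ∑' n, coeff n (rescale m (exp ℂ)) * w ^ n = Complex.exp (m * w) := by
  simp only [coeff_rescale_exp_mul_pow, Complex.exp_eq_exp_ℂ, NormedSpace.exp_eq_tsum_div]

theorem tsum_two_mul_of_odd_eq_zero {M : Type*} [AddCommMonoid M] [TopologicalSpace M]
    {f : ℕ → M} (hf : ∀ j, f (2 * j + 1) = 0) : ∑' j, f (2 * j) = ∑' n, f n := by
  refine (mul_right_injective₀ two_ne_zero).tsum_eq fun n hn ↦ ?_
  obtain ⟨j, rfl | rfl⟩ := Nat.even_or_odd' n
  · exact ⟨j, rfl⟩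
  · exact absurd (hf j) hn

theorem stmt_13_general (α z : ℂ)
    (h2 : ∀ n : ℕ, 2 * α + 1 ≠ -(n : ℂ)) :
    ∀ s : ℂ, s = 1 ∨ s = -1 →
      Summable (fun j : ℕ =>
        ‖z ^ j / ((ascPochhammer ℂ j).eval (α + 1) * (j.factorial : ℂ))‖) ∧
      Summable (fun n : ℕ =>
        ‖(ascPochhammer ℂ n).eval (α + 1 / 2) * (s * 4 * z ^ ((1 : ℂ) / 2)) ^ n /
          ((ascPochhammer ℂ n).eval (2 * α + 1) * (n.factorial : ℂ))‖) ∧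
      (∑' j : ℕ, z ^ j / ((ascPochhammer ℂ j).eval (α + 1) * (j.factorial : ℂ)))
        = Complex.exp (-(s * 2 * z ^ ((1 : ℂ) / 2))) *
          ∑' n : ℕ,
            (ascPochhammer ℂ n).eval (α + 1 / 2) * (s * 4 * z ^ ((1 : ℂ) / 2)) ^ n /
              ((ascPochhammer ℂ n).eval (2 * α + 1) * (n.factorial : ℂ)) := by
  intro s hs
  set r := s * z ^ ((1 : ℂ) / 2)
  have hr : r ^ 2 = z := by
    rw [mul_pow, one_div, Complex.cpow_ofNat_inv_pow]
    rcases hs with rfl | rfl <;> norm_num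
  have ha : ∀ n : ℕ, 2 * (α + 1 / 2) + n ≠ 0 := fun n h ↦ h2 n (by linear_combination h)
  set E := rescale (-2) (exp ℂ)
  set B := kummerSeries (α + 1 / 2) (2 * (α + 1 / 2)) (-2 * -2)
  have hE := summable_norm_coeff_rescale_exp_mul_pow (-2) r
  have hB := summable_norm_coeff_kummerSeries_mul_pow (α + 1 / 2) (-2 * -2) r ha
  have hEB (j : ℕ) : coeff (2 * j) (E * B) * r ^ (2 * j) =
      z ^ j / ((ascPochhammer ℂ j).eval (α + 1) * j !) := by
    rw [coeff_two_mul_rescale_exp_mul_kummerSeries _ _ ha, pow_mul, hr]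
    ring_nf
  have hB' (n : ℕ) : coeff n B * r ^ n =
      (ascPochhammer ℂ n).eval (α + 1 / 2) * (s * 4 * z ^ ((1 : ℂ) / 2)) ^ n /
        ((ascPochhammer ℂ n).eval (2 * α + 1) * n !) := by
    simp only [B, kummerSeries, coeff_mk, show 2 * (α + 1 / 2) = 2 * α + 1 by ring]
    ring
  refine ⟨?_, hB.congr fun n ↦ congrArg norm (hB' n), ?_⟩
  · exact ((summable_norm_coeff_mul_mul_pow hE hB).comp_injective
      (mul_right_injective₀ two_ne_zero)).congr fun j ↦ congrArg norm (hEB j)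
  · calc _ = ∑' j, coeff (2 * j) (E * B) * r ^ (2 * j) := tsum_congr fun j ↦ (hEB j).symm
      _ = ∑' n, coeff n (E * B) * r ^ n := tsum_two_mul_of_odd_eq_zero (f := fun n ↦
          coeff n (E * B) * r ^ n) fun j ↦ by
        rw [coeff_two_mul_add_one_rescale_exp_mul_kummerSeries _ _ ha, zero_mul]
      _ = Complex.exp (-2 * r) * ∑' n, coeff n B * r ^ n := by
        rw [tsum_coeff_mul_mul_pow hE hB, tsum_coeff_rescale_exp_mul_pow]
      _ = _ := by simp only [hB', r]; ring_nf

/-- Kummer's second transformation: if neither `α+1` nor `2α+1` is a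
nonpositive integer and `z ∉ (−∞,0)`, then for either choice of sign `s = ±1`,
both series converge absolutely and
`∑_j z^j/((α+1)_j j!) = e^{-2s√z} ∑_n (α+1/2)_n (4s√z)^n/((2α+1)_n n!)`,
where `(a)_n` is the Pochhammer symbol (`ascPochhammer`) and `√z` is principal. -/
theorem stmt_13 (α z : ℂ)
    (h1 : ∀ n : ℕ, α + 1 ≠ -(n : ℂ))
    (h2 : ∀ n : ℕ, 2 * α + 1 ≠ -(n : ℂ))
    (hz : ¬(z.im = 0 ∧ z.re < 0)) :
    ∀ s : ℂ, s = 1 ∨ s = -1 →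
      Summable (fun j : ℕ =>
        ‖z ^ j / ((ascPochhammer ℂ j).eval (α + 1) * (j.factorial : ℂ))‖) ∧
      Summable (fun n : ℕ =>
        ‖(ascPochhammer ℂ n).eval (α + 1 / 2) * (s * 4 * z ^ ((1 : ℂ) / 2)) ^ n /
          ((ascPochhammer ℂ n).eval (2 * α + 1) * (n.factorial : ℂ))‖) ∧
      (∑' j : ℕ, z ^ j / ((ascPochhammer ℂ j).eval (α + 1) * (j.factorial : ℂ)))
        = Complex.exp (-(s * 2 * z ^ ((1 : ℂ) / 2))) *
          ∑' n : ℕ,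
            (ascPochhammer ℂ n).eval (α + 1 / 2) * (s * 4 * z ^ ((1 : ℂ) / 2)) ^ n /
              ((ascPochhammer ℂ n).eval (2 * α + 1) * (n.factorial : ℂ)) :=
  stmt_13_general α z h2
end
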